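/- arXiv:1911.10163 — 2 statements merged into one kernel-verified Lean document; each statement's English description precedes it below -/
import Mathlib

section
/- Let M be a complex-valued continuous kernel on the triangle {(x,t) : 0 ≤ t ≤ x ≤ π} and λ ∈ ℂ. Define e₁(x,λ) = i·∫₀ˣ exp(−iλ(x−t)) · (∫₀ᵗ M(t,τ)·exp(−iλτ) dτ) dt (the first successive approximation in equation (8) applied to e₀(x,λ) = exp(−iλx)). Then e₁(x,λ) = ∫₀ˣ G₁(x,s)·exp(−iλs) ds for all x ∈ [0,π], where G₁(x,t) = i·∫_{x−t}^{x} M(s, t+s−x) ds; moreover G₁ is continuous on the triangle and G₁(x,0) = 0. -/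
open Complex MeasureTheory Set Real

/-- The triangle `{(x,t) : 0 ≤ t ≤ x ≤ π}`. -/
def Triangle : Set (ℝ × ℝ) := {p | 0 ≤ p.2 ∧ p.2 ≤ p.1 ∧ p.1 ≤ Real.pi}

/-!
Substituting `τ = s + t - x` in the inner integral of `e₁` turns the domain of the double
integral into `{(t, s) ∈ [0, x]² : t + s ≥ x}`, and exchanging the order of integration there
gives `∫₀ˣ G₁(x, s) exp(−iλs) ds`. Only values of `M` on the triangle enter, so `M` may be
replaced by a continuous extension to the whole plane (Tietze), which also makes `G₁`
continuous as a parametric integral.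
-/

open Function

universe u v

lemma isClosed_triangle : IsClosed Triangle :=
  (isClosed_le continuous_const continuous_snd).inter
    ((isClosed_le continuous_snd continuous_fst).inter
      (isClosed_le continuous_fst continuous_const))

lemma ContinuousOn.exists_continuous_eqOn {X : Type u} {Y : Type v} [TopologicalSpace X]
    [NormalSpace X] [TopologicalSpace Y] [TietzeExtension.{u, v} Y] {s : Set X}
    (hs : IsClosed s) {f : X → Y} (hf : ContinuousOn f s) :
    ∃ g : X → Y, Continuous g ∧ EqOn g f s := by
  obtain ⟨g, hg⟩ := ContinuousMap.exists_restrict_eq hs ⟨s.domRestrict f, hf.domRestrict⟩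
  exact ⟨g, g.continuous, fun p hp => congrFun (congrArg DFunLike.coe hg) ⟨p, hp⟩⟩

lemma integral_integral_swap_of_add_ge {E : Type*} [NormedAddCommGroup E] [NormedSpace ℝ E]
    {h : ℝ → ℝ → E} {x : ℝ} (hx : 0 ≤ x)
    (hh : ContinuousOn (uncurry h) (Icc 0 x ×ˢ Icc 0 x)) :
    ∫ t in (0:ℝ)..x, ∫ s in (x - t)..x, h t s
      = ∫ s in (0:ℝ)..x, ∫ t in (x - s)..x, h t s := by
  set S : Set (ℝ × ℝ) := {p | x < p.1 + p.2}
  have hS : MeasurableSet S := (isOpen_lt continuous_const (by fun_prop)).measurableSet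
  have hint : Integrable (uncurry fun t s => S.indicator (uncurry h) (t, s))
      ((volume.restrict (Ioc 0 x)).prod (volume.restrict (Ioc 0 x))) := by
    rw [Measure.prod_restrict]
    refine (IntegrableOn.mono_set ?_
      (prod_mono Ioc_subset_Icc_self Ioc_subset_Icc_self)).indicator hS
    exact hh.integrableOn_compact (isCompact_Icc.prod isCompact_Icc)
  have inner {a : ℝ} (ha : a ∈ Ioc 0 x) (g : ℝ → E) :
      ∫ b in Ioc 0 x, (Ioi (x - a)).indicator g b = ∫ b in (x - a)..x, g b := by
    rw [setIntegral_indicator measurableSet_Ioi, Ioc_inter_Ioi, max_eq_right (by linarith [ha.2]),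
      intervalIntegral.integral_of_le (by linarith [ha.1])]
  have L : ∫ t in Ioc 0 x, ∫ s in Ioc 0 x, S.indicator (uncurry h) (t, s)
      = ∫ t in Ioc 0 x, ∫ s in (x - t)..x, h t s := by
    refine setIntegral_congr_fun measurableSet_Ioc fun t ht => ?_
    rw [← inner ht]
    congr 1 with s
    simp only [S, indicator_apply, mem_ofPred_eq, mem_Ioi, uncurry_apply_pair,
      sub_lt_iff_lt_add']
  have R : ∫ s in Ioc 0 x, ∫ t in Ioc 0 x, S.indicator (uncurry h) (t, s)
      = ∫ s in Ioc 0 x, ∫ t in (x - s)..x, h t s := by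
    refine setIntegral_congr_fun measurableSet_Ioc fun s hs => ?_
    rw [← inner hs]
    congr 1 with t
    simp only [S, indicator_apply, mem_ofPred_eq, mem_Ioi, uncurry_apply_pair,
      sub_lt_iff_lt_add]
  rw [intervalIntegral.integral_of_le hx, intervalIntegral.integral_of_le hx, ← L, ← R,
    integral_integral_swap hint]

-- `e₁(x, λ)`
noncomputable def firstApprox (M : ℝ → ℝ → ℂ) (lam : ℂ) (x : ℝ) : ℂ :=
  I * ∫ t in (0:ℝ)..x,
    cexp (-I * lam * (x - t)) * ∫ τ in (0:ℝ)..t, M t τ * cexp (-I * lam * τ)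

-- `G₁(x, t)`
noncomputable def firstKernel (M : ℝ → ℝ → ℂ) (x t : ℝ) : ℂ :=
  I * ∫ u in (x - t)..x, M u (t + u - x)

lemma firstApprox_eq_integral_firstKernel_mul {N : ℝ → ℝ → ℂ}
    (hN : Continuous (uncurry N)) (lam : ℂ) {x : ℝ} (hx : 0 ≤ x) :
    firstApprox N lam x = ∫ s in (0:ℝ)..x, firstKernel N x s * cexp (-I * lam * s) := by
  set h : ℝ → ℝ → ℂ := fun t s => N t (s + t - x) * cexp (-I * lam * s)
  have hh : Continuous (uncurry h) :=
    (hN.comp (by fun_prop : Continuous fun p : ℝ × ℝ => (p.1, p.2 + p.1 - x))).mul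
      (by fun_prop)
  have substitute (t : ℝ) :
      cexp (-I * lam * (x - t)) * ∫ τ in (0:ℝ)..t, N t τ * cexp (-I * lam * τ)
        = ∫ s in (x - t)..x, h t s := by
    have shift := intervalIntegral.integral_comp_sub_right (a := x - t) (b := x)
      (fun τ => cexp (-I * lam * (x - t)) * (N t τ * cexp (-I * lam * τ))) (x - t)
    rw [sub_self, sub_sub_cancel] at shift
    rw [← intervalIntegral.integral_const_mul, ← shift]
    refine intervalIntegral.integral_congr fun s _ => ?_
    simp only [h, show s - (x - t) = s + t - x by ring]
    rw [mul_left_comm, ← Complex.exp_add]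
    push_cast
    ring_nf
  calc firstApprox N lam x = I * ∫ t in (0:ℝ)..x, ∫ s in (x - t)..x, h t s := by
        simp only [firstApprox, substitute]
    _ = I * ∫ s in (0:ℝ)..x, ∫ t in (x - s)..x, h t s := by
        rw [integral_integral_swap_of_add_ge hx hh.continuousOn]
    _ = ∫ s in (0:ℝ)..x, firstKernel N x s * cexp (-I * lam * s) := by
        rw [← intervalIntegral.integral_const_mul]
        congr 1 with s
        rw [firstKernel, mul_assoc, ← intervalIntegral.integral_mul_const]

lemma firstApprox_congr {M N : ℝ → ℝ → ℂ} (hMN : EqOn (uncurry M) (uncurry N) Triangle)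
    (lam : ℂ) {x : ℝ} (hx : x ∈ Icc 0 π) : firstApprox M lam x = firstApprox N lam x := by
  refine congrArg (I * ·) (intervalIntegral.integral_congr fun t ht => ?_)
  rw [uIcc_of_le hx.1] at ht
  refine congrArg (_ * ·) (intervalIntegral.integral_congr fun τ hτ => ?_)
  rw [uIcc_of_le ht.1] at hτ
  exact congrArg (· * _) (@hMN (t, τ) ⟨hτ.1, hτ.2, ht.2.trans hx.2⟩)

lemma firstKernel_congr {M N : ℝ → ℝ → ℂ} (hMN : EqOn (uncurry M) (uncurry N) Triangle)
    {x t : ℝ} (hxt : (x, t) ∈ Triangle) : firstKernel M x t = firstKernel N x t := by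
  obtain ⟨ht, htx, hx⟩ : 0 ≤ t ∧ t ≤ x ∧ x ≤ π := hxt
  refine congrArg (I * ·) (intervalIntegral.integral_congr fun u hu => ?_)
  rw [uIcc_of_le (by linarith)] at hu
  exact @hMN (u, t + u - x) ⟨by linarith [hu.1], by linarith, hu.2.trans hx⟩

lemma continuous_firstKernel {N : ℝ → ℝ → ℂ} (hN : Continuous (uncurry N)) :
    Continuous fun p : ℝ × ℝ => firstKernel N p.1 p.2 := by
  set f : ℝ × ℝ → ℝ → ℂ := fun p u => N u (p.2 + u - p.1)
  have hf : Continuous (uncurry f) :=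
    hN.comp (by fun_prop : Continuous fun q : (ℝ × ℝ) × ℝ => (q.2, q.1.2 + q.2 - q.1.1))
  have primitive {b : ℝ × ℝ → ℝ} (hb : Continuous b) :
      Continuous fun p => ∫ u in (0:ℝ)..b p, f p u :=
    intervalIntegral.continuous_parametric_intervalIntegral_of_continuous hf hb
  have split (p : ℝ × ℝ) : firstKernel N p.1 p.2
      = I * ((∫ u in (0:ℝ)..p.1, f p u) - ∫ u in (0:ℝ)..(p.1 - p.2), f p u) := by
    rw [firstKernel, intervalIntegral.integral_interval_sub_left] <;>
      exact (hf.comp (Continuous.prodMk_right p)).intervalIntegrable _ _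
  simp only [split]
  exact continuous_const.mul ((primitive continuous_fst).sub (primitive (by fun_prop)))

/-- The first successive approximation `e₁(x,λ)` (applied to `e₀(x,λ) = exp(−iλx)`)
equals `∫₀ˣ G₁(x,s) exp(−iλs) ds` with `G₁(x,t) = i ∫_{x−t}^{x} M(s, t+s−x) ds`;
moreover `G₁` is continuous on the triangle and `G₁(x,0) = 0`. -/
theorem stmt_2 (M : ℝ → ℝ → ℂ)
    (hM : ContinuousOn (fun p : ℝ × ℝ => M p.1 p.2) Triangle) (lam : ℂ) :
    (∀ x ∈ Icc (0:ℝ) Real.pi,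
      (Complex.I * ∫ t in (0:ℝ)..x,
          Complex.exp (-Complex.I * lam * (x - t))
            * ∫ τ in (0:ℝ)..t, M t τ * Complex.exp (-Complex.I * lam * τ))
      = ∫ s in (0:ℝ)..x,
          (Complex.I * ∫ u in (x - s)..x, M u (s + u - x))
            * Complex.exp (-Complex.I * lam * s)) ∧
    ContinuousOn
      (fun p : ℝ × ℝ => Complex.I * ∫ u in (p.1 - p.2)..p.1, M u (p.2 + u - p.1))
      Triangle ∧
    (∀ x ∈ Icc (0:ℝ) Real.pi,
      (Complex.I * ∫ u in (x - 0)..x, M u (0 + u - x)) = 0) := by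
  obtain ⟨g, hg, hgM⟩ := hM.exists_continuous_eqOn isClosed_triangle
  have hMN : EqOn (uncurry M) (uncurry (curry g)) Triangle := by
    rw [uncurry_curry]
    exact hgM.symm
  have hN : Continuous (uncurry (curry g)) := by rwa [uncurry_curry]
  refine ⟨fun x hx => ?_, ?_, fun x _ => by simp⟩
  · show firstApprox M lam x = ∫ s in (0:ℝ)..x, firstKernel M x s * cexp (-I * lam * s)
    rw [firstApprox_congr hMN lam hx, firstApprox_eq_integral_firstKernel_mul hN lam hx.1]
    refine intervalIntegral.integral_congr fun s hs => ?_
    rw [uIcc_of_le hx.1] at hs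
    rw [firstKernel_congr hMN ⟨hs.1, hs.2, hx.2⟩]
  · exact (continuous_firstKernel hN).continuousOn.congr fun p hp => firstKernel_congr hMN hp
end

section
/- Let M be a complex-valued continuous kernel on the triangle {(x,t) : 0 ≤ t ≤ x ≤ π}. Define G₁(x,t) = i·∫_{x−t}^{x} M(s, t+s−x) ds and, recursively, G_{n+1}(x,t) = i·∫_{x−t}^{x} (∫_{t+s−x}^{s} M(s,τ)·G_n(τ, t+s−x) dτ) ds for n ≥ 1. Then the series ∑_{n=1}^{∞} G_n(x,t) converges absolutely and uniformly on the triangle {(x,t) : 0 ≤ t ≤ x ≤ π}, and its sum G(x,t) is continuous there. -/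
open Complex MeasureTheory Set Real Filter

/-- The successive kernels: `Gseq M 0 = G₁` with
`G₁(x,t) = i ∫_{x−t}^{x} M(s, t+s−x) ds`, and `Gseq M n = G_{n+1}` with
`G_{n+1}(x,t) = i ∫_{x−t}^{x} ∫_{t+s−x}^{s} M(s,τ) Gₙ(τ, t+s−x) dτ ds`. -/
noncomputable def Gseq (M : ℝ → ℝ → ℂ) : ℕ → ℝ → ℝ → ℂ
  | 0 => fun x t => Complex.I * ∫ s in (x - t)..x, M s (t + s - x)
  | n + 1 => fun x t => Complex.I * ∫ s in (x - t)..x,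
      ∫ τ in (t + s - x)..s, M s τ * Gseq M n τ (t + s - x)

/-!
If `‖M‖ ≤ C` on the triangle, then every point `(s, τ)` at which the recursion samples `M` lies
in the triangle again and the inner integral runs over an interval of length `x - t ≤ π`, so by
induction `‖Gₙ₊₁(x,t)‖ ≤ Cπ (Cπx)ⁿ / n!`. The Weierstrass M-test against the exponential series
gives absolute and uniform convergence, and the sum is continuous as a uniform limit of continuous
partial sums. Each `Gₙ` is continuous because it is unchanged when `M` is replaced by a continuous
(Tietze) extension of `M|_triangle` to the plane, for which continuity of the parametric integrals
is standard.
-/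

open Function Nat

lemma continuous_parametric_intervalIntegral_of_continuous_bounds {X E : Type*}
    [TopologicalSpace X] [NormedAddCommGroup E] [NormedSpace ℝ E] {f : X → ℝ → E}
    (hf : Continuous (uncurry f)) {a b : X → ℝ} (ha : Continuous a) (hb : Continuous b) :
    Continuous fun p => ∫ s in a p..b p, f p s := by
  have hsplit : ∀ p, ∫ s in a p..b p, f p s = (∫ s in 0..b p, f p s) - ∫ s in 0..a p, f p s :=
    fun p => (intervalIntegral.integral_interval_sub_left
      ((hf.uncurry_left p).intervalIntegrable _ _)
      ((hf.uncurry_left p).intervalIntegrable _ _)).symm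
  simp only [hsplit]
  exact (intervalIntegral.continuous_parametric_intervalIntegral_of_continuous hf hb).sub
    (intervalIntegral.continuous_parametric_intervalIntegral_of_continuous hf ha)

lemma integral_pow_le_of_nonneg {a : ℝ} (b : ℝ) (ha : 0 ≤ a) (n : ℕ) :
    ∫ s in a..b, s ^ n ≤ b ^ (n + 1) / (n + 1) := by
  rw [integral_pow]
  gcongr
  exact sub_le_self _ (pow_nonneg ha _)

lemma isCompact_triangle : IsCompact Triangle :=
  (isCompact_Icc.prod isCompact_Icc).of_isClosed_subset
    ((isClosed_le continuous_const continuous_snd).inter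
      ((isClosed_le continuous_snd continuous_fst).inter
        (isClosed_le continuous_fst continuous_const)))
    fun _ ⟨ht, htx, hx⟩ => ⟨⟨ht.trans htx, hx⟩, ht, htx.trans hx⟩

section Triangle

lemma zero_mem_triangle : ((0 : ℝ), (0 : ℝ)) ∈ Triangle := ⟨le_rfl, le_rfl, pi_pos.le⟩

variable {x t s τ : ℝ}

lemma mk_mem_triangle_of_mem_Icc (hp : (x, t) ∈ Triangle) (hs : s ∈ Icc (x - t) x)
    (hτ : τ ∈ Icc (t + s - x) s) : (s, τ) ∈ Triangle := by
  obtain ⟨_, _, _⟩ := hp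
  obtain ⟨_, _⟩ := hs
  obtain ⟨_, _⟩ := hτ
  refine ⟨?_, ?_, ?_⟩ <;> dsimp only <;> linarith

lemma mk_sub_mem_triangle_of_mem_Icc (hp : (x, t) ∈ Triangle) (hs : s ∈ Icc (x - t) x)
    (hτ : τ ∈ Icc (t + s - x) s) : (τ, t + s - x) ∈ Triangle := by
  obtain ⟨_, _, _⟩ := hp
  obtain ⟨_, _⟩ := hs
  obtain ⟨_, _⟩ := hτ
  refine ⟨?_, ?_, ?_⟩ <;> dsimp only <;> linarith

end Triangle

lemma Gseq_eqOn_triangle {M N : ℝ → ℝ → ℂ} (h : EqOn (uncurry M) (uncurry N) Triangle)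
    (n : ℕ) : EqOn (uncurry (Gseq M n)) (uncurry (Gseq N n)) Triangle := by
  rintro ⟨x, t⟩ hp
  induction n generalizing x t with
  | zero =>
    simp only [uncurry_apply_pair, Gseq]
    congr 1
    refine intervalIntegral.integral_congr fun s hs => ?_
    rw [uIcc_of_le (sub_le_self x hp.1)] at hs
    exact h (mk_mem_triangle_of_mem_Icc hp hs ⟨le_rfl, by linarith [hp.2.1]⟩)
  | succ n ih =>
    simp only [uncurry_apply_pair, Gseq]
    congr 1
    refine intervalIntegral.integral_congr fun s hs => ?_
    rw [uIcc_of_le (sub_le_self x hp.1)] at hs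
    refine intervalIntegral.integral_congr fun τ hτ => ?_
    rw [uIcc_of_le (by linarith [hp.2.1])] at hτ
    exact congrArg₂ (· * ·) (h (mk_mem_triangle_of_mem_Icc hp hs hτ))
      (ih _ _ (mk_sub_mem_triangle_of_mem_Icc hp hs hτ))

lemma continuous_Gseq {M : ℝ → ℝ → ℂ} (hM : Continuous (uncurry M)) (n : ℕ) :
    Continuous (uncurry (Gseq M n)) := by
  induction n with
  | zero =>
    show Continuous fun p : ℝ × ℝ => I * ∫ s in (p.1 - p.2)..p.1, M s (p.2 + s - p.1)
    refine continuous_const.mul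
      (continuous_parametric_intervalIntegral_of_continuous_bounds ?_ (by fun_prop) (by fun_prop))
    exact hM.comp (continuous_snd.prodMk (by fun_prop))
  | succ n ih =>
    show Continuous fun p : ℝ × ℝ => I * ∫ s in (p.1 - p.2)..p.1,
      ∫ τ in (p.2 + s - p.1)..s, M s τ * Gseq M n τ (p.2 + s - p.1)
    refine continuous_const.mul
      (continuous_parametric_intervalIntegral_of_continuous_bounds
        (a := fun p : ℝ × ℝ => p.1 - p.2) (b := fun p => p.1)
        (continuous_parametric_intervalIntegral_of_continuous_bounds
          (a := fun q : (ℝ × ℝ) × ℝ => q.1.2 + q.2 - q.1.1) (b := fun q => q.2) ?_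
          (by fun_prop) (by fun_prop)) (by fun_prop) (by fun_prop))
    exact (hM.comp (by fun_prop : Continuous fun r : ((ℝ × ℝ) × ℝ) × ℝ => (r.1.2, r.2))).mul
      (ih.comp (by fun_prop :
        Continuous fun r : ((ℝ × ℝ) × ℝ) × ℝ => (r.2, r.1.1.2 + r.1.2 - r.1.1.1)))

lemma continuousOn_Gseq {M : ℝ → ℝ → ℂ} (hM : ContinuousOn (uncurry M) Triangle) (n : ℕ) :
    ContinuousOn (uncurry (Gseq M n)) Triangle := by
  obtain ⟨g, hg⟩ := ContinuousMap.exists_restrict_eq isCompact_triangle.isClosed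
    ⟨Triangle.domRestrict (uncurry M), hM.domRestrict⟩
  have hMg : EqOn (uncurry M) (uncurry (curry g)) Triangle :=
    fun p hp => (ContinuousMap.congr_fun hg ⟨p, hp⟩).symm
  have hg_cont : Continuous (uncurry (curry g)) := by
    simpa only [uncurry_curry] using g.continuous
  exact (continuous_Gseq hg_cont n).continuousOn.congr (Gseq_eqOn_triangle hMg n)

lemma norm_integral_mul_Gseq_le {M : ℝ → ℝ → ℂ} {C : ℝ} (hC : ∀ p ∈ Triangle, ‖uncurry M p‖ ≤ C)
    {n : ℕ} (hG : ∀ {x t : ℝ}, (x, t) ∈ Triangle → ‖Gseq M n x t‖ ≤ C * π * (C * π * x) ^ n / n !)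
    {x t s : ℝ} (hp : (x, t) ∈ Triangle) (hs : s ∈ Icc (x - t) x) :
    ‖∫ τ in (t + s - x)..s, M s τ * Gseq M n τ (t + s - x)‖
      ≤ C * π * (C * π) ^ (n + 1) / n ! * s ^ n := by
  have ⟨ht, htx, hxπ⟩ := hp
  have hC0 : 0 ≤ C := (norm_nonneg _).trans (hC _ zero_mem_triangle)
  have hs0 : 0 ≤ s := by linarith [hs.1]
  have hτ : ∀ τ ∈ uIoc (t + s - x) s,
      ‖M s τ * Gseq M n τ (t + s - x)‖ ≤ C * (C * π * (C * π * s) ^ n / n !) := by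
    intro τ hτ
    rw [uIoc_of_le (by linarith)] at hτ
    have hτ' := Ioc_subset_Icc_self hτ
    have hτ0 : 0 ≤ τ := by linarith [hs.1, hτ'.1]
    rw [norm_mul]
    refine mul_le_mul (hC _ (mk_mem_triangle_of_mem_Icc hp hs hτ'))
      ((hG (mk_sub_mem_triangle_of_mem_Icc hp hs hτ')).trans ?_) (norm_nonneg _) hC0
    gcongr
    exact hτ'.2
  calc _ ≤ C * (C * π * (C * π * s) ^ n / n !) * |s - (t + s - x)| :=
        intervalIntegral.norm_integral_le_of_norm_le_const hτ
    _ = C * (C * π * (C * π * s) ^ n / n !) * (x - t) := by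
        rw [show s - (t + s - x) = x - t by ring, abs_of_nonneg (by linarith)]
    _ ≤ C * (C * π * (C * π * s) ^ n / n !) * π := by gcongr; linarith
    _ = C * π * (C * π) ^ (n + 1) / n ! * s ^ n := by ring

lemma norm_Gseq_le {M : ℝ → ℝ → ℂ} {C : ℝ} (hC : ∀ p ∈ Triangle, ‖uncurry M p‖ ≤ C) (n : ℕ)
    {x t : ℝ} (hp : (x, t) ∈ Triangle) : ‖Gseq M n x t‖ ≤ C * π * (C * π * x) ^ n / n ! := by
  have hC0 : 0 ≤ C := (norm_nonneg _).trans (hC _ zero_mem_triangle)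
  induction n generalizing x t with
  | zero =>
    have hs : ∀ s ∈ uIoc (x - t) x, ‖M s (t + s - x)‖ ≤ C := by
      intro s hs
      rw [uIoc_of_le (sub_le_self x hp.1)] at hs
      exact hC _ (mk_mem_triangle_of_mem_Icc hp (Ioc_subset_Icc_self hs)
        ⟨le_rfl, by linarith [hp.2.1]⟩)
    calc ‖Gseq M 0 x t‖ = ‖∫ s in (x - t)..x, M s (t + s - x)‖ := by simp [Gseq]
      _ ≤ C * |x - (x - t)| := intervalIntegral.norm_integral_le_of_norm_le_const hs
      _ ≤ C * π * (C * π * x) ^ 0 / 0 ! := by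
        simp only [sub_sub_cancel, abs_of_nonneg hp.1, pow_zero, factorial_zero, cast_one,
          div_one, mul_one]
        gcongr
        exact hp.2.1.trans hp.2.2
  | succ n ih =>
    calc ‖Gseq M (n + 1) x t‖
        = ‖∫ s in (x - t)..x, ∫ τ in (t + s - x)..s, M s τ * Gseq M n τ (t + s - x)‖ := by
          simp [Gseq]
      _ ≤ ∫ s in (x - t)..x, C * π * (C * π) ^ (n + 1) / n ! * s ^ n :=
          intervalIntegral.norm_integral_le_of_norm_le (sub_le_self x hp.1)
            (ae_of_all _ fun s hs => norm_integral_mul_Gseq_le hC ih hp (Ioc_subset_Icc_self hs))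
            (Continuous.intervalIntegrable (by fun_prop) _ _)
      _ ≤ C * π * (C * π) ^ (n + 1) / n ! * (x ^ (n + 1) / (n + 1)) := by
          rw [intervalIntegral.integral_const_mul]
          gcongr
          exact integral_pow_le_of_nonneg x (by linarith [hp.2.1]) n
      _ = C * π * (C * π * x) ^ (n + 1) / (n + 1)! := by
          rw [factorial_succ]
          push_cast
          field_simp
          ring

/-- The series `∑_{n≥1} Gₙ(x,t)` converges absolutely and uniformly on the triangle,
and its sum `G(x,t)` is continuous there. -/
theorem stmt_4 (M : ℝ → ℝ → ℂ)
    (hM : ContinuousOn (fun p : ℝ × ℝ => M p.1 p.2) Triangle) :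
    (∀ p ∈ Triangle, Summable (fun n : ℕ => ‖Gseq M n p.1 p.2‖)) ∧
    TendstoUniformlyOn
      (fun N : ℕ => fun p : ℝ × ℝ => ∑ n ∈ Finset.range N, Gseq M n p.1 p.2)
      (fun p : ℝ × ℝ => ∑' n : ℕ, Gseq M n p.1 p.2) atTop Triangle ∧
    ContinuousOn (fun p : ℝ × ℝ => ∑' n : ℕ, Gseq M n p.1 p.2) Triangle := by
  obtain ⟨C, hC⟩ := isCompact_triangle.exists_bound_of_continuousOn hM
  have hC0 : 0 ≤ C := (norm_nonneg _).trans (hC _ zero_mem_triangle)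
  have hu : Summable fun n : ℕ => C * π * ((C * π * π) ^ n / n !) :=
    (Real.summable_pow_div_factorial _).mul_left (C * π)
  have hGu : ∀ n, ∀ p ∈ Triangle, ‖Gseq M n p.1 p.2‖ ≤ C * π * ((C * π * π) ^ n / n !) := by
    intro n p hp
    refine (norm_Gseq_le hC n hp).trans ?_
    have hx : 0 ≤ p.1 := hp.1.trans hp.2.1
    rw [mul_div_assoc]
    gcongr
    exact hp.2.2
  have hunif := tendstoUniformlyOn_tsum_nat hu hGu
  exact ⟨fun p hp => hu.of_nonneg_of_le (fun _ => norm_nonneg _) (hGu · p hp), hunif,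
    hunif.continuousOn (Frequently.of_forall fun _ =>
      continuousOn_finsetSum _ fun n _ => continuousOn_Gseq hM n)⟩
end
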